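/- arXiv:2002.07102 — 4 statements merged into one kernel-verified Lean document; each statement's English description precedes it below -/
import Mathlib

section
/- Let F be a formal diffeomorphism of (C^n,0) with an invariant formal curve Γ of multiplicity ν at the origin. Then the inner eigenvalue λ_Γ = (F|_Γ)'(0) and the tangent eigenvalue λ(Γ) (the eigenvalue of D_0F corresponding to the tangent direction of Γ) satisfy (λ_Γ)^ν = λ(Γ). -/
open MvPowerSeries

noncomputable section

/-- Formal power series in `n` variables over `ℂ`. -/
abbrev PS (n : ℕ) := MvPowerSeries (Fin n) ℂ

/-- A formal diffeomorphism of `(ℂ^n,0)`, modelled as a `ℂ`-algebra automorphism of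
`ℂ[[x₁,…,xₙ]]` (acting by composition `g ↦ g ∘ F`). -/
abbrev FormalDiffeo (n : ℕ) := PS n ≃ₐ[ℂ] PS n

/-- A formal (singular) vector field on `(ℂ^n,0)`: a derivation of `ℂ[[x₁,…,xₙ]]`. -/
abbrev FormalVF (n : ℕ) := Derivation ℂ (PS n) (PS n)

/-- The space of `k`-jets: truncated coefficient data of the components of a diffeomorphism. -/
abbrev JetSpace (n k : ℕ) :=
  Fin n → {d : Fin n →₀ ℕ // (d.sum fun _ e => e) ≤ k} → ℂ

/-- The `k`-jet of a formal diffeomorphism. -/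
def jetOf (n k : ℕ) (F : FormalDiffeo n) : JetSpace n k :=
  fun i d => coeff d.1 (F (X i))

/-- Polynomial functions on the jet space: the algebra generated by coordinates. -/
def polyFuns (n k : ℕ) : Subalgebra ℂ (JetSpace n k → ℂ) :=
  Algebra.adjoin ℂ {φ | ∃ i d, φ = fun J => J i d}

/-- The Zariski topology on the jet space. -/
def zTop (n k : ℕ) : TopologicalSpace (JetSpace n k) :=
  .generateFrom {U | ∃ φ ∈ polyFuns n k, U = {x | φ x ≠ 0}}

/-- The pro-algebraic (Zariski) closure of a set of formal diffeomorphisms: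
those whose `k`-jet lies, for every `k`, in the Zariski closure of the set of `k`-jets. -/
def proAlgClosure {n : ℕ} (G : Set (FormalDiffeo n)) : Set (FormalDiffeo n) :=
  {F | ∀ k, jetOf n k F ∈ @closure _ (zTop n k) (jetOf n k '' G)}

/-- The connected component of the identity of the pro-algebraic closure:
those diffeomorphisms whose `k`-jet lies, for every `k`, in the Zariski-connected component
of the jet of the identity inside the Zariski closure of the `k`-jets. -/
def proAlgIdComp {n : ℕ} (G : Set (FormalDiffeo n)) : Set (FormalDiffeo n) :=
  {F | ∀ k, jetOf n k F ∈
    @connectedComponentIn _ (zTop n k)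
      (@closure _ (zTop n k) (jetOf n k '' G)) (jetOf n k 1)}

/-- `j`-th iterate of a derivation, as a map. -/
def derivPow {n : ℕ} (Y : FormalVF n) (j : ℕ) (g : PS n) : PS n :=
  ((Y.toLinearMap : PS n →ₗ[ℂ] PS n) ^ j) g

/-- The time-one flow `Exp(Y)` applied to `g`, namely `∑_j Y^j(g)/j!`, where the
(countable) sum of each coefficient is taken in `ℂ`. -/
def expSeries {n : ℕ} (Y : FormalVF n) (g : PS n) : PS n :=
  fun d => ∑' j : ℕ, ((j.factorial : ℂ))⁻¹ * coeff d (derivPow Y j g)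

/-- `F` is the time-one flow (exponential) of the formal vector field `Y`. -/
def IsExpOf {n : ℕ} (F : FormalDiffeo n) (Y : FormalVF n) : Prop :=
  ∀ g : PS n, F g = expSeries Y g

/-- A formal vector field is singular if it vanishes at the origin. -/
def IsSingularVF {n : ℕ} (Y : FormalVF n) : Prop :=
  ∀ i : Fin n, constantCoeff (Y (X i)) = 0

/-- `Y` belongs to the Lie algebra of the pro-algebraic closure of `G`
(characterized by all its time-`t` flows lying in the closure). -/
def InLieAlgOf {n : ℕ} (G : Set (FormalDiffeo n)) (Y : FormalVF n) : Prop :=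
  ∀ t : ℂ, ∃ F : FormalDiffeo n, F ∈ proAlgClosure G ∧ IsExpOf F (t • Y)

/-- `Y` is an infinitesimal generator of `F`. -/
def IsInfGen {n : ℕ} (Y : FormalVF n) (F : FormalDiffeo n) : Prop :=
  IsSingularVF Y ∧ IsExpOf F Y ∧ InLieAlgOf (Subgroup.zpowers F : Set (FormalDiffeo n)) Y

/-- The linear part `D₀F` of a formal diffeomorphism. -/
def linPartD {n : ℕ} (F : FormalDiffeo n) : Matrix (Fin n) (Fin n) ℂ :=
  Matrix.of fun i j => coeff (Finsupp.single j 1) (F (X i))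

/-- The linear part `D₀Y` of a formal vector field. -/
def linPartV {n : ℕ} (Y : FormalVF n) : Matrix (Fin n) (Fin n) ℂ :=
  Matrix.of fun i j => coeff (Finsupp.single j 1) (Y (X i))

/-- Substitution of a tuple of one-variable power series (a formal curve) into a
multivariate power series. -/
def substCurve {n : ℕ} (γ : Fin n → PowerSeries ℂ) (f : PS n) : PowerSeries ℂ :=
  PowerSeries.mk fun m =>
    ∑' e : (Fin n →₀ ℕ), coeff e f * PowerSeries.coeff m (∏ i, (γ i) ^ (e i))

/-- Substitution (composition) of one-variable power series: `g ∘ θ`. -/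
def substPS (θ g : PowerSeries ℂ) : PowerSeries ℂ :=
  PowerSeries.mk fun m =>
    ∑' e : ℕ, PowerSeries.coeff e g * PowerSeries.coeff m (θ ^ e)

/-- Substitution of a tuple of `n`-variable power series into an `n`-variable power series. -/
def substMv {n : ℕ} (σ : Fin n → PS n) (f : PS n) : PS n :=
  fun d => ∑' e : (Fin n →₀ ℕ), coeff e f * coeff d (∏ i, (σ i) ^ (e i))

/-- `γ` (with `θ`) is a formal invariant curve of the formal diffeomorphism `F`:
`γ` is a nonzero tuple of power series without constant term, `θ` is a formal
diffeomorphism in one variable, and `F ∘ γ = γ ∘ θ`. -/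
def IsInvariantCurve {n : ℕ} (F : FormalDiffeo n) (γ : Fin n → PowerSeries ℂ)
    (θ : PowerSeries ℂ) : Prop :=
  γ ≠ 0 ∧ (∀ i, PowerSeries.constantCoeff (γ i) = 0) ∧
    PowerSeries.constantCoeff θ = 0 ∧ PowerSeries.coeff 1 θ ≠ 0 ∧
    ∀ i, substCurve γ (F (X i)) = substPS θ (γ i)

/-! Compare the coefficients of `s^ν` on both sides of `F ∘ γ = γ ∘ θ`. Since every `γᵢ` has
order at least `ν`, on the left only the linear part of `F` contributes, giving `D₀F · v` for the
tangent vector `v = (coeff ν γᵢ)ᵢ`; on the right only the term `coeff ν (γᵢ) · θ ^ ν`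
contributes, giving `θ'(0) ^ ν · v`. -/

namespace PowerSeries

variable {R : Type*} [CommSemiring R]

theorem coeff_self_pow_of_constantCoeff_eq_zero {θ : R⟦X⟧} (hθ : constantCoeff θ = 0) (k : ℕ) :
    coeff k (θ ^ k) = coeff 1 θ ^ k := by
  obtain ⟨ψ, rfl⟩ := X_dvd_iff.mpr hθ
  rw [mul_pow, coeff_X_pow_mul', if_pos le_rfl, Nat.sub_self, coeff_zero_eq_constantCoeff,
    map_pow, ← zero_add 1, coeff_succ_X_mul, coeff_zero_eq_constantCoeff]

theorem le_order_prod_pow {ι : Type*} [Fintype ι] {γ : ι → R⟦X⟧} {ν : ℕ}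
    (hγ : ∀ j, (ν : ℕ∞) ≤ (γ j).order) (e : ι →₀ ℕ) :
    ((e.degree * ν : ℕ) : ℕ∞) ≤ (∏ j, γ j ^ e j).order :=
  calc ((e.degree * ν : ℕ) : ℕ∞) = ∑ j, e j • (ν : ℕ∞) := by
        simp [Finsupp.degree_eq_sum, Finset.sum_mul]
    _ ≤ ∑ j, e j • (γ j).order := Finset.sum_le_sum fun j _ => nsmul_le_nsmul_right (hγ j) _
    _ ≤ ∑ j, (γ j ^ e j).order := Finset.sum_le_sum fun j _ => le_order_pow _ _
    _ ≤ (∏ j, γ j ^ e j).order := le_order_prod _ _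

theorem coeff_prod_pow_eq_zero_of_degree_ne_one {ι : Type*} [Fintype ι] {γ : ι → R⟦X⟧} {ν : ℕ}
    (hν : 0 < ν) (hγ : ∀ j, (ν : ℕ∞) ≤ (γ j).order) {e : ι →₀ ℕ} (he : e.degree ≠ 1) :
    coeff ν (∏ j, γ j ^ e j) = 0 := by
  rcases Nat.lt_or_ge e.degree 2 with hlt | hge
  · obtain rfl : e = 0 := (Finsupp.degree_eq_zero_iff e).mp (by omega)
    simp [coeff_one, hν.ne']
  · refine coeff_of_lt_order ν (lt_of_lt_of_le ?_ (le_order_prod_pow hγ e))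
    exact_mod_cast (by nlinarith : ν < e.degree * ν)

end PowerSeries

theorem coeff_substPS_of_le_order {θ g : PowerSeries ℂ} (hθ : PowerSeries.constantCoeff θ = 0)
    {ν : ℕ} (hg : (ν : ℕ∞) ≤ g.order) :
    PowerSeries.coeff ν (substPS θ g) = PowerSeries.coeff ν g * PowerSeries.coeff 1 θ ^ ν := by
  rw [substPS, PowerSeries.coeff_mk, tsum_eq_single ν,
    PowerSeries.coeff_self_pow_of_constantCoeff_eq_zero hθ]
  intro e he
  rcases he.lt_or_gt with hlt | hgt
  · rw [PowerSeries.coeff_of_lt_order e (lt_of_lt_of_le (by exact_mod_cast hlt) hg), zero_mul]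
  · have hθe := PowerSeries.le_order_pow_of_constantCoeff_eq_zero e hθ
    rw [PowerSeries.coeff_of_lt_order ν (lt_of_lt_of_le (by exact_mod_cast hgt) hθe), mul_zero]

theorem coeff_substCurve_of_le_order {n ν : ℕ} (hν : 0 < ν) {γ : Fin n → PowerSeries ℂ}
    (hγ : ∀ j, (ν : ℕ∞) ≤ (γ j).order) (f : PS n) :
    PowerSeries.coeff ν (substCurve γ f) =
      ∑ j, MvPowerSeries.coeff (Finsupp.single j 1) f * PowerSeries.coeff ν (γ j) := by
  classical
  let linear : Fin n ↪ (Fin n →₀ ℕ) :=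
    ⟨(Finsupp.single · 1), Finsupp.single_left_injective one_ne_zero⟩
  rw [substCurve, PowerSeries.coeff_mk, tsum_eq_sum (s := Finset.univ.map linear), Finset.sum_map]
  · simp [linear, Finsupp.single_apply, pow_ite]
  · intro e he
    have hdeg : e.degree ≠ 1 := fun h1 => he <| by
      obtain ⟨j, rfl⟩ := (Finsupp.range_single_one (σ := Fin n)).ge h1
      exact Finset.mem_map_of_mem _ (Finset.mem_univ j)
    rw [PowerSeries.coeff_prod_pow_eq_zero_of_degree_ne_one hν hγ hdeg, mul_zero]

theorem inner_pow_mult_eq_tangent_general {n : ℕ} (F : FormalDiffeo n)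
    (γ : Fin n → PowerSeries ℂ) (θ : PowerSeries ℂ)
    (hinv : IsInvariantCurve F γ θ) (ν : ℕ) (hν : 0 < ν)
    (hlow : ∀ i, ∀ m < ν, PowerSeries.coeff m (γ i) = 0) :
    Matrix.mulVec (linPartD F) (fun i => PowerSeries.coeff ν (γ i)) =
      ((PowerSeries.coeff 1 θ) ^ ν) • (fun i => PowerSeries.coeff ν (γ i)) := by
  obtain ⟨-, -, hθ, -, hcurve⟩ := hinv
  have hord : ∀ j, (ν : ℕ∞) ≤ (γ j).order := fun j => PowerSeries.nat_le_order _ _ (hlow j)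
  funext i
  have hcoeff := congrArg (PowerSeries.coeff ν) (hcurve i)
  rw [coeff_substCurve_of_le_order hν hord, coeff_substPS_of_le_order hθ (hord i)] at hcoeff
  simpa [Matrix.mulVec, dotProduct, linPartD, mul_comm] using hcoeff

/-- If `Γ` (parametrized by `γ`, with `F∘γ = γ∘θ`) is a formal invariant curve
of `F` of multiplicity `ν`, then the tangent direction `v = (coeff ν (γ i))ᵢ` of `Γ` is an
eigenvector of `D₀F` with eigenvalue `(θ'(0))^ν`, i.e. `(λ_Γ)^ν = λ(Γ)`. -/
theorem inner_pow_mult_eq_tangent {n : ℕ} (F : FormalDiffeo n)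
    (γ : Fin n → PowerSeries ℂ) (θ : PowerSeries ℂ)
    (hinv : IsInvariantCurve F γ θ) (ν : ℕ) (hν : 0 < ν)
    (hlow : ∀ i, ∀ m < ν, PowerSeries.coeff m (γ i) = 0)
    (hne : ∃ i, PowerSeries.coeff ν (γ i) ≠ 0) :
    Matrix.mulVec (linPartD F) (fun i => PowerSeries.coeff ν (γ i)) =
      ((PowerSeries.coeff 1 θ) ^ ν) • (fun i => PowerSeries.coeff ν (γ i)) :=
  inner_pow_mult_eq_tangent_general F γ θ hinv ν hν hlow

end
end

section
/- Let λ_1,...,λ_n be nonzero complex numbers, S = {(m_1,...,m_n) ∈ Z^n : λ_1^{m_1}···λ_n^{m_n} = 1}, and S' = {(m_1,...,m_n) ∈ Z^n : λ_1^{m_1}···λ_n^{m_n} is a root of unity}. Then S' is the intersection of Z^n with the Q-vector space generated by S, S has finite index in S', and the set R = {λ_1^{m_1}···λ_n^{m_n} : (m_1,...,m_n) ∈ S'} is a finite subgroup of the unit circle with |R| = [S' : S]. -/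
open MvPowerSeries

noncomputable section

/-!
Write `χ : ℤⁿ → ℂˣ`, `v ↦ ∏ λᵢ^{vᵢ}`. Then `S = ker χ` and `S' = χ⁻¹(torsion)`. A vector lies in
`S'` iff some nonzero multiple of it lies in `S`, which is exactly membership in the `ℚ`-span of `S`.
The image `R = χ(S')` is a finitely generated torsion abelian group, hence finite, and lies on the
unit circle because it consists of roots of unity; the first isomorphism theorem identifies it
with `S' / S`.
-/

def zpowProdHom {ι G : Type*} [Fintype ι] [CommGroup G] (u : ι → G) : (ι → ℤ) →+ Additive G :=
  (Fintype.linearCombination ℤ fun i => Additive.ofMul (u i)).toAddMonoidHom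

@[simp]
theorem toMul_zpowProdHom {ι G : Type*} [Fintype ι] [CommGroup G] (u : ι → G) (v : ι → ℤ) :
    (zpowProdHom u v).toMul = ∏ i, u i ^ v i := by
  simp [zpowProdHom, Fintype.linearCombination_apply]

theorem intCast_mem_span_rat_iff {ι : Type*} (S : AddSubgroup (ι → ℤ)) (v : ι → ℤ) :
    (fun i => (v i : ℚ)) ∈
        Submodule.span ℚ ((fun (w : ι → ℤ) => fun i => (w i : ℚ)) '' (S : Set (ι → ℤ))) ↔
      ∃ k : ℤ, k ≠ 0 ∧ k • v ∈ S := by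
  let cast : (ι → ℤ) →ₗ[ℤ] (ι → ℚ) := (Int.castAddHom ℚ).toIntLinearMap.compLeft ι
  change cast v ∈ Submodule.span ℚ (cast '' (S.toIntSubmodule : Set (ι → ℤ))) ↔ _
  -- `ℚ` localizes `ℤ`: the `ℚ`-span is the `ℤ`-span divided by nonzero integers.
  rw [IsLocalization.mem_span_iff (nonZeroDivisors ℤ), Submodule.span_image, Submodule.span_eq]
  have hscaled : ∀ (w : ι → ℤ) {k : ℤ} (hk : k ∈ nonZeroDivisors ℤ),
      cast v = IsLocalization.mk' ℚ 1 ⟨k, hk⟩ • cast w ↔ k • v = w := by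
    intro w k hk
    have hk0 : (k : ℚ) ≠ 0 := by exact_mod_cast nonZeroDivisors.ne_zero hk
    simp only [funext_iff, IsFractionRing.mk'_eq_div, cast]
    refine forall_congr' fun i => ?_
    rw [← Int.cast_inj (α := ℚ)]
    simp [field, mul_comm]
  constructor
  · rintro ⟨_, ⟨w, hw, rfl⟩, ⟨k, hk⟩, hv⟩
    exact ⟨k, nonZeroDivisors.ne_zero hk, (hscaled w hk).1 hv ▸ hw⟩
  · rintro ⟨k, hk, hkv⟩
    exact ⟨_, ⟨k • v, hkv, rfl⟩, ⟨k, mem_nonZeroDivisors_of_ne_zero hk⟩,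
      (hscaled _ (mem_nonZeroDivisors_of_ne_zero hk)).2 rfl⟩

theorem AddSubgroup.finite_map_of_le_torsion {M A : Type*} [AddCommGroup M] [AddCommGroup A]
    [IsNoetherian ℤ M] (χ : M →+ A) {H : AddSubgroup M}
    (hH : H.map χ ≤ AddCommGroup.torsion A) : Finite (H.map χ) := by
  have : AddGroup.FG H := Module.Finite.iff_addGroup_fg.mp
    (inferInstance : Module.Finite ℤ H.toIntSubmodule)
  have : AddGroup.FG (H.map χ) := AddGroup.fg_of_surjective (χ.addSubgroupMap_surjective H)
  exact AddCommGroup.finite_of_fg_isAddTorsion _ fun x =>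
    AddSubmonoid.isOfFinAddOrder_coe.mp (hH x.2)

/-- let `S` be the lattice of resonances of nonzero numbers `λ₁,…,λₙ` and `S'`
the lattice of exponents giving roots of unity.  Then `S'` is the intersection of `ℤⁿ` with
the `ℚ`-span of `S`, `S` has finite index in `S'`, and the image `R` of `S'` under
`v ↦ ∏ λᵢ^{vᵢ}` is a finite subgroup of the unit circle of order `[S' : S]`. -/
theorem resonance_saturation {n : ℕ} (lam : Fin n → ℂ) (hlam : ∀ i, lam i ≠ 0)
    (S S' : AddSubgroup (Fin n → ℤ))
    (hS : ∀ v : Fin n → ℤ, v ∈ S ↔ ∏ i, lam i ^ v i = 1)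
    (hS' : ∀ v : Fin n → ℤ, v ∈ S' ↔ ∃ k : ℕ, 0 < k ∧ (∏ i, lam i ^ v i) ^ k = 1) :
    -- `S'` is the intersection of `ℤⁿ` with the `ℚ`-vector space generated by `S`
    (∀ v : Fin n → ℤ, v ∈ S' ↔
      (fun i => (v i : ℚ)) ∈
        Submodule.span ℚ ((fun (w : Fin n → ℤ) => fun i => (w i : ℚ)) '' (S : Set (Fin n → ℤ)))) ∧
    -- `S` is a finite index subgroup of `S'`
    S ≤ S' ∧ S.relIndex S' ≠ 0 ∧
    -- `R = {∏ λᵢ^{vᵢ} : v ∈ S'}` is a finite subgroup of the unit circle ...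
    (1 : ℂ) ∈ {z : ℂ | ∃ v ∈ S', z = ∏ i, lam i ^ v i} ∧
    (∀ a ∈ {z : ℂ | ∃ v ∈ S', z = ∏ i, lam i ^ v i},
      ∀ b ∈ {z : ℂ | ∃ v ∈ S', z = ∏ i, lam i ^ v i},
        a * b ∈ {z : ℂ | ∃ v ∈ S', z = ∏ i, lam i ^ v i}) ∧
    (∀ a ∈ {z : ℂ | ∃ v ∈ S', z = ∏ i, lam i ^ v i},
      a⁻¹ ∈ {z : ℂ | ∃ v ∈ S', z = ∏ i, lam i ^ v i}) ∧
    (∀ a ∈ {z : ℂ | ∃ v ∈ S', z = ∏ i, lam i ^ v i}, ‖a‖ = 1) ∧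
    ({z : ℂ | ∃ v ∈ S', z = ∏ i, lam i ^ v i}).Finite ∧
    -- ... and `|R| = [S' : S]`
    Nat.card {z : ℂ | ∃ v ∈ S', z = ∏ i, lam i ^ v i} = S.relIndex S' := by
  set χ := zpowProdHom fun i => Units.mk0 (lam i) (hlam i)
  have hχ : ∀ v, ((χ v).toMul : ℂ) = ∏ i, lam i ^ v i := fun v => by simp [χ]
  have hker : S = χ.ker := by
    ext v
    rw [hS, AddMonoidHom.mem_ker, ← hχ, Units.val_eq_one]
    rfl
  have htors : S' = (AddCommGroup.torsion _).comap χ := by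
    ext v
    rw [hS', AddSubgroup.mem_comap, AddCommGroup.mem_torsion, ← hχ, ← isOfFinOrder_iff_pow_eq_one,
      Units.isOfFinOrder_val, ← isOfFinAddOrder_ofMul_iff]
    rfl
  have hR : {z : ℂ | ∃ v ∈ S', z = ∏ i, lam i ^ v i} =
      (Units.val ∘ Additive.toMul) '' S'.map χ := by
    rw [AddSubgroup.coe_map, Set.image_image]
    ext z
    simp only [Function.comp_apply, hχ, Set.mem_image, SetLike.mem_coe, eq_comm]
    rfl
  have hfin : Finite (S'.map χ) :=
    AddSubgroup.finite_map_of_le_torsion χ (htors ▸ AddSubgroup.map_comap_le _ _)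
  have hcard : Nat.card {z : ℂ | ∃ v ∈ S', z = ∏ i, lam i ^ v i} = Nat.card (S'.map χ) := by
    rw [hR, Nat.card_image_of_injective (Units.val_injective.comp Additive.toMul.injective)]
    rfl
  subst hker htors
  refine ⟨fun v => ?_, χ.ker_le_comap _, ?_, ⟨0, zero_mem _, by simp⟩, ?_, ?_, ?_,
    hR ▸ Set.toFinite _, hcard.trans (AddSubgroup.relIndex_ker _ χ).symm⟩
  · rw [intCast_mem_span_rat_iff]
    simp only [AddSubgroup.mem_comap, AddCommGroup.mem_torsion, isOfFinAddOrder_iff_zsmul_eq_zero,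
      AddMonoidHom.mem_ker, map_zsmul]
  · rw [AddSubgroup.relIndex_ker]
    exact Nat.card_pos.ne'
  · rintro _ ⟨v, hv, rfl⟩ _ ⟨w, hw, rfl⟩
    exact ⟨v + w, add_mem hv hw, by simp only [← hχ, map_add, toMul_add, Units.val_mul]⟩
  · rintro _ ⟨v, hv, rfl⟩
    exact ⟨-v, neg_mem hv, by simp only [← hχ, map_neg, toMul_neg, Units.val_inv_eq_inv_val]⟩
  · rintro _ ⟨v, hv, rfl⟩
    obtain ⟨k, hk, hpow⟩ := (hS' v).1 hv
    exact Complex.norm_eq_one_of_pow_eq_one hpow hk.ne'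

end
end

section
/- Let F ∈ Diff(C^n,0) with index of embeddability m. Then every eigenvalue of D_0(F^m) that is a root of unity is equal to 1. -/
/-!
Let `c` be an eigenvalue of `D₀F` with `c ^ m = μ`, and `v` an eigenvector. Reading off one
coordinate of `J v` (for `J` the linear part of a 1-jet) and dividing by the same coordinate of
`v` gives a polynomial function `χ = eigenFunctional v i` on 1-jets whose value at the jet of any
`G` with `D₀G v = d v` is `d`. If `c ^ r = 1`, then `χ ^ r = 1` on the jets of `⟨F⟩`, hence on
their Zariski closure. A Zariski-continuous function with finitely many values is constant on a
connected set, so on the identity component `χ` equals its value `1` at the identity; at `F ^ m`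
that value is `c ^ m = μ`.
-/

open MvPowerSeries

noncomputable section

namespace MvPowerSeries

open Finsupp

section CommSemiring

variable {σ R : Type*} [CommSemiring R]

theorem coeff_single_one_mul (j : σ) (u v : MvPowerSeries σ R) :
    coeff (single j 1) (u * v) =
      constantCoeff u * coeff (single j 1) v + coeff (single j 1) u * constantCoeff v := by
  classical
  simp [coeff_mul, Finsupp.antidiagonal_single, Finset.Nat.antidiagonal_succ]

theorem exists_eq_sum_X_mul [Fintype σ] {g : MvPowerSeries σ R} (hg : constantCoeff g = 0) :
    ∃ h : σ → MvPowerSeries σ R, g = ∑ l, X l * h l := by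
  classical
  let _ : LinearOrder σ := linearOrderOfSTO WellOrderingRel
  -- each monomial of `g` goes into the summand of the smallest variable it contains
  set h : σ → MvPowerSeries σ R := fun l e =>
    if (e + single l 1).support.min = (l : WithTop σ) then coeff (e + single l 1) g else 0
  refine ⟨h, ext fun d => ?_⟩
  have hterm : ∀ l : σ, coeff d (X l * h l) =
      if d.support.min = (l : WithTop σ) then coeff d g else 0 := by
    intro l
    rw [X_def, coeff_monomial_mul, one_mul]
    by_cases hle : single l 1 ≤ d
    · rw [if_pos hle]
      change (if (d - single l 1 + single l 1).support.min = (l : WithTop σ) then _ else _) = _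
      rw [tsub_add_cancel_of_le hle]
    · rw [if_neg hle, if_neg]
      intro hmin
      exact hle (single_le_iff.mpr
        (Nat.one_le_iff_ne_zero.mpr (mem_support_iff.mp (Finset.mem_of_min hmin))))
  rw [map_sum, Finset.sum_congr rfl fun l _ => hterm l]
  cases hmin : d.support.min with
  | top =>
    rw [Finset.min_eq_top, support_eq_empty] at hmin
    simp [hmin, hg]
  | coe l₀ => simp

end CommSemiring

section Field

variable {σ τ K : Type*} [Field K]

theorem algHom_C (φ : MvPowerSeries σ K →ₐ[K] MvPowerSeries τ K) (a : K) :
    φ (C a) = C a := by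
  simpa [algebraMap_apply] using φ.commutes a

theorem constantCoeff_algHom (φ : MvPowerSeries σ K →ₐ[K] MvPowerSeries τ K)
    (g : MvPowerSeries σ K) : constantCoeff (φ g) = constantCoeff g := by
  have hker : ∀ g, constantCoeff g = 0 → constantCoeff (φ g) = 0 := by
    intro g hg
    by_contra h
    -- otherwise `g - C a`, for `a` the constant coefficient of `φ g`, is a unit sent to a nonunit
    have hunit : IsUnit (g - C (constantCoeff (φ g))) :=
      isUnit_iff_constantCoeff.mpr (by simpa [hg] using h)
    simpa [algHom_C] using (hunit.map φ).map constantCoeff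
  have := hker (g - C (constantCoeff g)) (by simp)
  rwa [map_sub, algHom_C, map_sub, constantCoeff_C, sub_eq_zero] at this

theorem coeff_single_one_algHom [Fintype σ] (φ : MvPowerSeries σ K →ₐ[K] MvPowerSeries τ K)
    {g : MvPowerSeries σ K} (hg : constantCoeff g = 0) (j : τ) :
    coeff (single j 1) (φ g) = ∑ l, coeff (single l 1) g * coeff (single j 1) (φ (X l)) := by
  classical
  obtain ⟨h, rfl⟩ := exists_eq_sum_X_mul hg
  have hlin : ∀ l, coeff (single l 1) (∑ l', X l' * h l') = constantCoeff (h l) := by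
    intro l
    simp [coeff_single_one_mul, coeff_X, single_left_inj, eq_comm]
  simp_rw [hlin, map_sum, map_mul, coeff_single_one_mul, constantCoeff_algHom, constantCoeff_X,
    zero_mul, zero_add, mul_comm]

end Field

end MvPowerSeries

theorem linPartD_one {n : ℕ} : linPartD (1 : FormalDiffeo n) = 1 := by
  ext i j
  simp [linPartD, Matrix.one_apply, coeff_X, Finsupp.single_left_inj, eq_comm]

theorem linPartD_mul {n : ℕ} (G H : FormalDiffeo n) :
    linPartD (G * H) = linPartD H * linPartD G := by
  ext i j
  exact coeff_single_one_algHom (G : PS n →ₐ[ℂ] PS n)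
    ((constantCoeff_algHom (H : PS n →ₐ[ℂ] PS n) (X i)).trans (constantCoeff_X i)) j

theorem linPartD_pow {n : ℕ} (G : FormalDiffeo n) (k : ℕ) :
    linPartD (G ^ k) = linPartD G ^ k := by
  induction k with
  | zero => exact linPartD_one
  | succ k ih => rw [pow_succ, linPartD_mul, ih, pow_succ']

namespace Matrix

variable {ι K : Type*} [Fintype ι] [DecidableEq ι]

theorem pow_mulVec_eq_smul [CommSemiring K] {A : Matrix ι ι K} {v : ι → K} {c : K}
    (h : A *ᵥ v = c • v) (k : ℕ) :
    (A ^ k) *ᵥ v = c ^ k • v := by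
  induction k with
  | zero => simp
  | succ k ih => rw [pow_succ, ← mulVec_mulVec, h, mulVec_smul, ih, smul_smul, pow_succ']

theorem exists_eigenvector_of_mem_roots_charpoly_pow [Field K] [IsAlgClosed K] {A : Matrix ι ι K}
    {m : ℕ} {μ : K} (hμ : μ ∈ (A ^ m).charpoly.roots) :
    ∃ c : K, ∃ v : ι → K, v ≠ 0 ∧ A *ᵥ v = c • v ∧ c ^ m = μ := by
  have hspec : μ ∈ spectrum K (A ^ m) :=
    mem_spectrum_iff_isRoot_charpoly.mpr (Polynomial.mem_roots'.mp hμ).2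
  have : Nontrivial (Matrix ι ι K) := by
    refine not_subsingleton_iff_nontrivial.mp fun _ => ?_
    exact hspec (isUnit_of_subsingleton _)
  rw [spectrum.map_pow_of_nonempty (spectrum.nonempty_of_isAlgClosed_of_finiteDimensional K A)]
    at hspec
  obtain ⟨c, hc, rfl⟩ := hspec
  rw [← spectrum_toLin', ← Module.End.hasEigenvalue_iff_mem_spectrum] at hc
  obtain ⟨v, hv⟩ := hc.exists_hasEigenvector
  exact ⟨c, v, hv.2, by simpa using Module.End.mem_eigenspace_iff.mp hv.1, rfl⟩

end Matrix

theorem IsPreconnected.apply_eq_of_image_finite {X K : Type*} [TopologicalSpace X] [CommRing K]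
    [IsDomain K] {s : Set X} (hs : IsPreconnected s) {f : X → K}
    (hf : ∀ p : Polynomial K, IsOpen {x | p.eval (f x) ≠ 0}) (hfin : (f '' s).Finite)
    {x y : X} (hx : x ∈ s) (hy : y ∈ s) : f y = f x := by
  classical
  by_contra hne
  set p : Polynomial K := ∏ b ∈ hfin.toFinset.erase (f x), (Polynomial.X - Polynomial.C b)
  have hp : ∀ z, p.eval (f z) = 0 ↔ f z ≠ f x ∧ f z ∈ f '' s := by
    intro z
    simp [p, Polynomial.eval_prod, Finset.prod_eq_zero_iff, sub_eq_zero]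
  have hopen : IsOpen {z | f z - f x ≠ 0} := by
    convert hf (Polynomial.X - Polynomial.C (f x)) using 4
    simp
  have hcover : s ⊆ {z | p.eval (f z) ≠ 0} ∪ {z | f z - f x ≠ 0} := by
    intro z _
    by_cases hzx : f z = f x
    · exact Or.inl fun h => ((hp z).mp h).1 hzx
    · exact Or.inr (sub_ne_zero.mpr hzx)
  obtain ⟨z, hzs, hpz, hz⟩ := hs _ _ (hf p) hopen hcover
    ⟨x, hx, fun h => ((hp x).mp h).1 rfl⟩ ⟨y, hy, by simpa [sub_eq_zero] using hne⟩
  exact hpz ((hp z).mpr ⟨by simpa [sub_eq_zero] using hz, z, hzs, rfl⟩)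

section Jets

open Matrix Topology

variable {n : ℕ}

theorem isOpen_setOf_eval_ne_zero {k : ℕ} {φ : JetSpace n k → ℂ} (hφ : φ ∈ polyFuns n k)
    (p : Polynomial ℂ) : IsOpen[zTop n k] {J | p.eval (φ J) ≠ 0} := by
  have hp : Polynomial.aeval φ p ∈ polyFuns n k :=
    Algebra.adjoin_le (Set.singleton_subset_iff.mpr hφ)
      (Polynomial.aeval_mem_adjoin_singleton ℂ φ)
  have hopen : IsOpen[zTop n k] {J | Polynomial.aeval φ p J ≠ 0} :=
    TopologicalSpace.isOpen_generateFrom_of_mem ⟨_, hp, rfl⟩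
  simpa only [Polynomial.aeval_pi_apply₂, Polynomial.coe_aeval_eq_eval] using hopen

def linearIndex (l : Fin n) : {d : Fin n →₀ ℕ // (d.sum fun _ e => e) ≤ 1} :=
  ⟨Finsupp.single l 1, by simp⟩

def eigenFunctional (v : Fin n → ℂ) (i : Fin n) (J : JetSpace n 1) : ℂ :=
  (∑ l, J i (linearIndex l) * v l) / v i

theorem eigenFunctional_mem_polyFuns (v : Fin n → ℂ) (i : Fin n) :
    eigenFunctional v i ∈ polyFuns n 1 := by
  have hcoord : ∀ l, (fun J : JetSpace n 1 => J i (linearIndex l)) ∈ polyFuns n 1 :=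
    fun l => Algebra.subset_adjoin ⟨i, linearIndex l, rfl⟩
  convert Subalgebra.sum_mem _ (t := Finset.univ)
    fun l _ => Subalgebra.smul_mem _ (hcoord l) (v l / v i) using 1
  ext J
  simp only [eigenFunctional, Finset.sum_apply, Pi.smul_apply, smul_eq_mul, Finset.sum_div]
  exact Finset.sum_congr rfl fun l _ => by ring

theorem eigenFunctional_jetOf {G : FormalDiffeo n} {v : Fin n → ℂ} {c : ℂ}
    (h : linPartD G *ᵥ v = c • v) {i : Fin n} (hi : v i ≠ 0) :
    eigenFunctional v i (jetOf n 1 G) = c := by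
  rw [eigenFunctional, div_eq_iff hi]
  have hrow := congrFun h i
  simp only [mulVec, dotProduct, Pi.smul_apply, smul_eq_mul] at hrow
  exact hrow

def eigenSubgroup (v : Fin n → ℂ) (U : Subgroup ℂˣ) : Subgroup (FormalDiffeo n) where
  carrier := {G | ∃ c ∈ U, linPartD G *ᵥ v = (c : ℂ) • v}
  one_mem' := ⟨1, U.one_mem, by simp [linPartD_one]⟩
  mul_mem' := by
    rintro G H ⟨c, hc, hG⟩ ⟨d, hd, hH⟩
    refine ⟨c * d, U.mul_mem hc hd, ?_⟩
    rw [linPartD_mul, ← mulVec_mulVec, hG, mulVec_smul, hH, smul_smul, Units.val_mul, mul_comm]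
  inv_mem' := by
    rintro G ⟨c, hc, hG⟩
    refine ⟨c⁻¹, U.inv_mem hc, ?_⟩
    have hinv : linPartD G⁻¹ *ᵥ (linPartD G *ᵥ v) = v := by
      rw [mulVec_mulVec, ← linPartD_mul, mul_inv_cancel, linPartD_one, one_mulVec]
    rw [hG, mulVec_smul] at hinv
    conv_rhs => rw [← hinv]
    rw [smul_smul, ← Units.val_mul, inv_mul_cancel, Units.val_one, one_smul]

theorem closure_jetOf_zpowers_subset {F : FormalDiffeo n} {v : Fin n → ℂ} {c : ℂ} {r : ℕ}
    (hr : 0 < r) (hcr : c ^ r = 1) (hFv : linPartD F *ᵥ v = c • v) {i : Fin n}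
    (hi : v i ≠ 0) :
    closure[zTop n 1] (jetOf n 1 '' (Subgroup.zpowers F : Set (FormalDiffeo n))) ⊆
      {J | eigenFunctional v i J ^ r = 1} := by
  have hzpowers : Subgroup.zpowers F ≤ eigenSubgroup v (rootsOfUnity r ℂ) := by
    have hc0 : c ≠ 0 := by rintro rfl; simp [zero_pow hr.ne'] at hcr
    refine Subgroup.zpowers_le.mpr ⟨Units.mk0 c hc0, ?_, hFv⟩
    simp [mem_rootsOfUnity, Units.ext_iff, hcr]
  let _ : TopologicalSpace (JetSpace n 1) := zTop n 1
  refine closure_minimal ?_ ?_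
  · rintro _ ⟨H, hH, rfl⟩
    obtain ⟨u, hu, hHv⟩ := hzpowers hH
    rw [Set.mem_ofPred_eq, eigenFunctional_jetOf hHv hi, ← Units.val_pow_eq_pow_val,
      (mem_rootsOfUnity r u).mp hu, Units.val_one]
  · have hopen := isOpen_setOf_eval_ne_zero (eigenFunctional_mem_polyFuns v i)
      (Polynomial.X ^ r - 1)
    simp only [Polynomial.eval_sub, Polynomial.eval_pow, Polynomial.eval_X, Polynomial.eval_one,
      sub_ne_zero] at hopen
    exact isOpen_compl_iff.mp (by simpa only [Set.compl_ofPred] using hopen)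

theorem eigenvalue_eq_one_of_mem_proAlgIdComp {F G : FormalDiffeo n}
    (hG : G ∈ proAlgIdComp (Subgroup.zpowers F : Set (FormalDiffeo n))) {v : Fin n → ℂ}
    (hv : v ≠ 0) {c d : ℂ} (hc : IsOfFinOrder c) (hFv : linPartD F *ᵥ v = c • v)
    (hGv : linPartD G *ᵥ v = d • v) : d = 1 := by
  obtain ⟨i, hi⟩ : ∃ i, v i ≠ 0 := Function.ne_iff.mp hv
  obtain ⟨r, hr, hcr⟩ := isOfFinOrder_iff_pow_eq_one.mp hc
  let _ : TopologicalSpace (JetSpace n 1) := zTop n 1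
  set S := closure (jetOf n 1 '' (Subgroup.zpowers F : Set (FormalDiffeo n)))
  have hfin : (eigenFunctional v i '' connectedComponentIn S (jetOf n 1 1)).Finite := by
    refine (Polynomial.nthRoots r (1 : ℂ)).toFinset.finite_toSet.subset ?_
    rintro _ ⟨J, hJ, rfl⟩
    simpa [Polynomial.mem_nthRoots hr] using
      closure_jetOf_zpowers_subset hr hcr hFv hi (connectedComponentIn_subset _ _ hJ)
  have h1 : jetOf n 1 1 ∈ connectedComponentIn S (jetOf n 1 1) :=
    mem_connectedComponentIn (subset_closure ⟨1, (Subgroup.zpowers F).one_mem, rfl⟩)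
  have hconst := isPreconnected_connectedComponentIn.apply_eq_of_image_finite
    (isOpen_setOf_eval_ne_zero (eigenFunctional_mem_polyFuns v i)) hfin h1 (hG 1)
  rwa [eigenFunctional_jetOf hGv hi,
    eigenFunctional_jetOf (c := 1) (by simp [linPartD_one]) hi] at hconst

end Jets

theorem eigenvalue_root_of_unity_eq_one_general {n : ℕ} (F : FormalDiffeo n) (m : ℕ)
    (hmem : F ^ m ∈ proAlgIdComp (Subgroup.zpowers F : Set (FormalDiffeo n))) :
    ∀ μ ∈ (linPartD (F ^ m)).charpoly.roots, (∃ k : ℕ, 0 < k ∧ μ ^ k = 1) → μ = 1 := by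
  intro μ hμ hμk
  rw [linPartD_pow] at hμ
  obtain ⟨c, v, hv, hFv, rfl⟩ := Matrix.exists_eigenvector_of_mem_roots_charpoly_pow hμ
  rcases eq_or_ne m 0 with rfl | hm
  · exact pow_zero c
  have hc : IsOfFinOrder c := (isOfFinOrder_iff_pow_eq_one.mpr hμk).of_pow hm
  refine eigenvalue_eq_one_of_mem_proAlgIdComp hmem hv hc hFv ?_
  rw [linPartD_pow]
  exact Matrix.pow_mulVec_eq_smul hFv m

/-- if `m` is the index of embeddability of `F`, then every eigenvalue of
`D₀(F^m)` which is a root of unity equals `1`. -/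
theorem eigenvalue_root_of_unity_eq_one {n : ℕ} (F : FormalDiffeo n) (m : ℕ) (hm : 0 < m)
    (hmem : F ^ m ∈ proAlgIdComp (Subgroup.zpowers F : Set (FormalDiffeo n)))
    (hmin : ∀ k : ℕ, 0 < k →
      F ^ k ∈ proAlgIdComp (Subgroup.zpowers F : Set (FormalDiffeo n)) → m ≤ k) :
    ∀ μ ∈ (linPartD (F ^ m)).charpoly.roots, (∃ k : ℕ, 0 < k ∧ μ ^ k = 1) → μ = 1 :=
  eigenvalue_root_of_unity_eq_one_general F m hmem

end
end

section
/- Let I be an ideal of the ring C[[x_1,...,x_n]] of formal power series. Then the set I_I = {F formal diffeomorphism of (C^n,0) : I∘F ⊆ I} is a pro-algebraic subgroup of the group of formal diffeomorphisms, and moreover I_I = {F : I∘F = I}. -/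
open MvPowerSeries

noncomputable section

/-!
Since `ℂ[[x]]` is Noetherian, an automorphism `F` with `F(I) ⊆ I` satisfies `F(I) = I`: the chain
`I ⊆ F⁻¹(I) ⊆ F⁻²(I) ⊆ ⋯` stabilizes and `F⁻¹` acts injectively on ideals. So the stabilizer
of `I` is a subgroup.

Modulo `𝔪^(k+1)`, `F g` is a polynomial (with the truncation of `g` as coefficients) in the
`k`-jet of `F`. Hence, for `g ∈ I`, the `k`-jets `J` with `g ∘ J ∈ I + 𝔪^(k+1)` form a
Zariski-closed set containing the `k`-jets of the stabilizer. An `F` in the pro-algebraic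
closure therefore maps `g` into `⋂ₖ (I + 𝔪^(k+1))`, which is `I` by Krull's intersection theorem.
-/

open IsLocalRing
open scoped Pointwise Topology

theorem OrderEmbedding.apply_eq_self_of_le_apply {α : Type*} [PartialOrder α] [WellFoundedGT α]
    (f : α ↪o α) {x : α} (hx : x ≤ f x) : f x = x := by
  have hchain : Monotone fun k => f^[k] x :=
    monotone_nat_of_le_succ fun k => by
      rw [Function.iterate_succ_apply]
      exact f.monotone.iterate k hx
  obtain ⟨N, hN⟩ := WellFoundedGT.monotone_chain_condition ⟨_, hchain⟩
  have hstable : f^[N] x = f^[N] (f x) := by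
    simpa [Function.iterate_succ_apply] using hN (N + 1) N.le_succ
  exact (f.injective.iterate N hstable).symm

namespace Ideal

variable {R : Type*} [CommRing R]

theorem comap_eq_self_of_le_comap [IsNoetherianRing R] (σ : R ≃+* R) {I : Ideal R}
    (h : I ≤ I.comap σ) : I.comap σ = I :=
  σ.idealComapOrderIso.toOrderEmbedding.apply_eq_self_of_le_apply h

theorem mem_stabilizer_iff_forall_smul_mem [IsNoetherianRing R] {G : Type*} [Group G]
    [MulSemiringAction G R] {I : Ideal R} {g : G} :
    g ∈ MulAction.stabilizer G I ↔ ∀ x ∈ I, g • x ∈ I := by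
  rw [MulAction.mem_stabilizer_iff]
  refine ⟨fun h x hx => h ▸ smul_mem_pointwise_smul g x I hx, fun h => ?_⟩
  have hcomap := comap_eq_self_of_le_comap (MulSemiringAction.toRingAut G R g) h
  ext x
  rw [mem_pointwise_smul_iff_inv_smul_mem]
  conv_lhs => rw [← hcomap]
  simp

/-- **Krull's intersection theorem**, applied to the module `R ⧸ I`. -/
theorem iInf_sup_pow_eq [IsNoetherianRing R] [IsLocalRing R] (I : Ideal R) {J : Ideal R}
    (hJ : J ≠ ⊤) : ⨅ k : ℕ, (I ⊔ J ^ k) = I := by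
  refine le_antisymm (fun f hf => ?_) (le_iInf fun k => le_sup_left)
  have hkrull := J.iInf_pow_smul_eq_bot_of_isLocalRing (M := R ⧸ I) hJ
  rw [← Quotient.eq_zero_iff_mem, ← Submodule.mem_bot R, ← hkrull, Submodule.mem_iInf]
  intro k
  obtain ⟨a, ha, b, hb, rfl⟩ := Submodule.mem_sup.mp (Submodule.mem_iInf _ |>.mp hf k)
  rw [map_add, Quotient.eq_zero_iff_mem.mpr ha, zero_add]
  have := Submodule.smul_mem_smul hb (Submodule.mem_top (x := (1 : R ⧸ I)))
  rwa [Algebra.smul_def, mul_one] at this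

end Ideal

theorem AlgEquiv.map_mem_maximalIdeal_pow {R A : Type*} [CommSemiring R] [CommRing A]
    [IsLocalRing A] [Algebra R A] (F : A ≃ₐ[R] A) {N : ℕ} {x : A}
    (hx : x ∈ maximalIdeal A ^ N) : F x ∈ maximalIdeal A ^ N := by
  have hm : maximalIdeal A ≤ (maximalIdeal A).comap F := fun y hy => by
    simpa [mem_maximalIdeal, mem_nonunits_iff] using hy
  exact Ideal.le_comap_pow _ N (Ideal.pow_right_mono hm N hx)

theorem MvPolynomial.aeval_sub_aeval_mem {σ R A : Type*} [CommSemiring R] [CommRing A]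
    [Algebra R A] {I : Ideal A} {x y : σ → A} (hxy : ∀ i, x i - y i ∈ I)
    (p : MvPolynomial σ R) : aeval x p - aeval y p ∈ I := by
  rw [← Ideal.Quotient.mk_eq_mk_iff_sub_mem, ← Ideal.Quotient.mkₐ_eq_mk R, ← AlgHom.comp_apply,
    ← AlgHom.comp_apply, comp_aeval, comp_aeval]
  congr 2
  funext i
  exact (Ideal.Quotient.mk_eq_mk_iff_sub_mem _ _).mpr (hxy i)

namespace MvPowerSeries

variable {σ K : Type*} [Field K]

theorem X_mem_maximalIdeal (i : σ) : X i ∈ maximalIdeal (MvPowerSeries σ K) := by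
  simp [mem_maximalIdeal, mem_nonunits_iff, isUnit_iff_constantCoeff]

theorem monomial_one_mem_maximalIdeal_pow (d : σ →₀ ℕ) :
    monomial d (1 : K) ∈ maximalIdeal _ ^ d.degree := by
  induction d using Finsupp.induction with
  | zero => simp
  | single_add i a d _ _ ih =>
    rw [← one_mul (1 : K), ← monomial_mul_monomial, ← X_pow_eq, map_add,
      Finsupp.degree_single, pow_add]
    exact Ideal.mul_mem_mul (Ideal.pow_mem_pow (X_mem_maximalIdeal i) a) ih

theorem mem_maximalIdeal_pow_of_le_order [Finite σ] {N : ℕ} {f : MvPowerSeries σ K}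
    (hf : (N : ℕ∞) ≤ f.order) : f ∈ maximalIdeal _ ^ N := by
  classical
  -- `f = ∑ X^e q_e` over the exponents `e` of degree `N`, each exponent `d` of `f` being
  -- attributed to one `lead d ≤ d` of degree `N`.
  have hlead : ∀ d : σ →₀ ℕ, ∃ e ≤ d, N ≤ d.degree → e.degree = N := fun d =>
    if h : N ≤ d.degree then (d.exists_le_degree_eq N h).imp fun _ he => ⟨he.1, fun _ => he.2⟩
    else ⟨0, bot_le, fun h' => absurd h' h⟩
  choose lead hlead_le hlead_deg using hlead
  let S := (Finsupp.finite_of_degree_eq (σ := σ) N).toFinset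
  have hS : ∀ e, e ∈ S ↔ e.degree = N := fun e => Set.Finite.mem_toFinset _
  let q : (σ →₀ ℕ) → MvPowerSeries σ K := fun e c =>
    if lead (c + e) = e then coeff (c + e) f else 0
  have hq : ∀ e c, coeff c (q e) = if lead (c + e) = e then coeff (c + e) f else 0 :=
    fun _ _ => rfl
  have hdecomp : f = ∑ e ∈ S, monomial e 1 * q e := by
    ext d
    simp only [map_sum, coeff_monomial_mul, one_mul, hq]
    by_cases hd : N ≤ d.degree
    · rw [Finset.sum_eq_single (lead d)]
      · simp [hlead_le d, tsub_add_cancel_of_le (hlead_le d)]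
      · intro e _ he
        by_cases hed : e ≤ d
        · simp [hed, tsub_add_cancel_of_le hed, Ne.symm he]
        · simp [hed]
      · simp [hS, hlead_deg d hd]
    · rw [coeff_of_lt_order (lt_of_lt_of_le (by exact_mod_cast not_le.mp hd) hf)]
      refine (Finset.sum_eq_zero fun e he => ?_).symm
      have : ¬ e ≤ d := fun hle => hd ((hS e).mp he ▸ Finsupp.degree_mono hle)
      simp [this]
  rw [hdecomp]
  refine Ideal.sum_mem _ fun e he => Ideal.mul_mem_right _ _ ?_
  simpa [(hS e).mp he] using monomial_one_mem_maximalIdeal_pow (K := K) e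

theorem sub_truncTotal_mem_maximalIdeal_pow [Finite σ] (N : ℕ) (f : MvPowerSeries σ K) :
    f - truncTotal N f ∈ maximalIdeal _ ^ N :=
  mem_maximalIdeal_pow_of_le_order <| le_order fun d hd => by
    simp [coeff_truncTotal _ (by exact_mod_cast hd)]

end MvPowerSeries

section Jets

/-- The polynomial map whose `k`-jet is `J`. -/
def jetSeries {n k : ℕ} (J : JetSpace n k) (i : Fin n) : PS n :=
  fun e => if h : e.degree ≤ k then J i ⟨e, h⟩ else 0

/-- `jetSeries` with the coordinates of the jet space as indeterminate coefficients. -/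
def genericJetSeries (n k : ℕ) (i : Fin n) : MvPowerSeries (Fin n) (polyFuns n k) :=
  fun e => if h : e.degree ≤ k then ⟨fun J => J i ⟨e, h⟩, Algebra.subset_adjoin ⟨i, ⟨e, h⟩, rfl⟩⟩
    else 0

variable {n k : ℕ}

theorem coeff_jetSeries (J : JetSpace n k) (i : Fin n) (e : Fin n →₀ ℕ) :
    coeff e (jetSeries J i) = if h : e.degree ≤ k then J i ⟨e, h⟩ else 0 :=
  rfl

theorem coeff_genericJetSeries (i : Fin n) (e : Fin n →₀ ℕ) :
    coeff e (genericJetSeries n k i) = if h : e.degree ≤ k then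
      ⟨fun J => J i ⟨e, h⟩, Algebra.subset_adjoin ⟨i, ⟨e, h⟩, rfl⟩⟩ else 0 :=
  rfl

def evalJet (J : JetSpace n k) : polyFuns n k →ₐ[ℂ] ℂ :=
  (Pi.evalAlgHom ℂ (fun _ => ℂ) J).comp (polyFuns n k).val

theorem map_evalJet_genericJetSeries (J : JetSpace n k) (i : Fin n) :
    MvPowerSeries.map (evalJet J) (genericJetSeries n k i) = jetSeries J i := by
  ext e
  simp only [MvPowerSeries.coeff_map]
  by_cases h : e.degree ≤ k <;> simp [coeff_jetSeries, coeff_genericJetSeries, h, evalJet]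

theorem coeff_aeval_jetSeries_mem_polyFuns (p : MvPolynomial (Fin n) ℂ) (d : Fin n →₀ ℕ) :
    (fun J : JetSpace n k => coeff d (MvPolynomial.aeval (jetSeries J) p)) ∈ polyFuns n k := by
  convert (coeff d (MvPolynomial.aeval (genericJetSeries n k) p)).2 using 1
  funext J
  have hmap : MvPolynomial.aeval (jetSeries J) p =
      MvPowerSeries.mapAlgHom (σ := Fin n) (evalJet J)
        (MvPolynomial.aeval (genericJetSeries n k) p) := by
    rw [← AlgHom.comp_apply, MvPolynomial.comp_aeval]
    congr 2
    funext i
    exact (map_evalJet_genericJetSeries J i).symm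
  rw [hmap, MvPowerSeries.mapAlgHom_apply, MvPowerSeries.coeff_map]
  rfl

theorem sub_jetSeries_jetOf_mem_maximalIdeal_pow (F : FormalDiffeo n) (i : Fin n) :
    F (X i) - jetSeries (jetOf n k F) i ∈ maximalIdeal (PS n) ^ (k + 1) :=
  MvPowerSeries.mem_maximalIdeal_pow_of_le_order <| le_order fun d hd => by
    have hd : d.degree ≤ k := Nat.lt_succ_iff.mp (by exact_mod_cast hd)
    simp [coeff_jetSeries, hd, jetOf]

theorem sub_aeval_jetSeries_mem_maximalIdeal_pow (F : FormalDiffeo n) (g : PS n) :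
    F g - MvPolynomial.aeval (jetSeries (jetOf n k F)) (truncTotal (k + 1) g) ∈
      maximalIdeal (PS n) ^ (k + 1) := by
  set p := truncTotal (k + 1) g
  have hcoe : F p = MvPolynomial.aeval (fun i => F (X i)) p := by
    have h := congrArg (· p) (MvPolynomial.aeval_unique
      ((F : PS n →ₐ[ℂ] PS n).comp (MvPolynomial.coeToMvPowerSeries.algHom ℂ)))
    simpa [Function.comp_def] using h
  have hsplit : F g - MvPolynomial.aeval (jetSeries (jetOf n k F)) p =
      F (g - p) + (MvPolynomial.aeval (fun i => F (X i)) p -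
        MvPolynomial.aeval (jetSeries (jetOf n k F)) p) := by
    rw [map_sub, hcoe]; ring
  rw [hsplit]
  exact add_mem
    (F.map_mem_maximalIdeal_pow (MvPowerSeries.sub_truncTotal_mem_maximalIdeal_pow _ g))
    (MvPolynomial.aeval_sub_aeval_mem (sub_jetSeries_jetOf_mem_maximalIdeal_pow F) p)

theorem isClosed_setOf_eq_zero_of_mem_polyFuns {φ : JetSpace n k → ℂ} (hφ : φ ∈ polyFuns n k) :
    IsClosed[zTop n k] {J | φ J = 0} := by
  rw [← @isOpen_compl_iff]
  exact TopologicalSpace.isOpen_generateFrom_of_mem ⟨φ, hφ, rfl⟩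

theorem isClosed_setOf_mem_ideal {K : Ideal (PS n)} (hK : maximalIdeal (PS n) ^ (k + 1) ≤ K)
    {Φ : JetSpace n k → PS n} (hΦ : ∀ d, (fun J => coeff d (Φ J)) ∈ polyFuns n k) :
    IsClosed[zTop n k] {J | Φ J ∈ K} := by
  let _ : TopologicalSpace (JetSpace n k) := zTop n k
  let D := (Finsupp.finite_of_degree_lt (σ := Fin n) (k + 1)).toFinset
  let π := Ideal.Quotient.mkₐ ℂ K
  have hπ : ∀ f : PS n, π f = ∑ d ∈ D, coeff d f • π (monomial d 1) := by
    intro f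
    have hlow : f - ∑ d ∈ D, coeff d f • monomial d 1 ∈ K :=
      hK <| MvPowerSeries.mem_maximalIdeal_pow_of_le_order <| le_order fun e he => by
        have he : e ∈ D := (Set.Finite.mem_toFinset _).mpr (by exact_mod_cast he)
        simp [coeff_monomial, he]
    have hπf : π f = π (∑ d ∈ D, coeff d f • monomial d 1) :=
      (Ideal.Quotient.mk_eq_mk_iff_sub_mem _ _).mpr hlow
    rw [hπf, map_sum]
    simp only [map_smul]
  have hset : {J | Φ J ∈ K} = ⋂ ℓ : Module.Dual ℂ (PS n ⧸ K),
      {J | ∑ d ∈ D, coeff d (Φ J) * ℓ (π (monomial d 1)) = 0} := by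
    ext J
    rw [Set.mem_iInter, Set.mem_ofPred_eq, ← Ideal.Quotient.eq_zero_iff_mem,
      ← Ideal.Quotient.mkₐ_eq_mk ℂ, ← Module.forall_dual_apply_eq_zero_iff ℂ]
    refine forall_congr' fun ℓ => ?_
    rw [hπ, map_sum]
    simp only [map_smul, smul_eq_mul]
    rfl
  rw [hset]
  refine isClosed_iInter fun ℓ => isClosed_setOf_eq_zero_of_mem_polyFuns ?_
  convert Subalgebra.sum_mem (t := D) _ fun d _ =>
    Subalgebra.mul_mem _ (hΦ d) (Subalgebra.algebraMap_mem _ (ℓ (π (monomial d 1))))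
  simp [Finset.sum_apply]

end Jets

theorem apply_mem_sup_maximalIdeal_pow_of_mem_proAlgClosure {n : ℕ} {I : Ideal (PS n)}
    {F : FormalDiffeo n} (hF : F ∈ proAlgClosure {F : FormalDiffeo n | ∀ g ∈ I, F g ∈ I})
    {g : PS n} (hg : g ∈ I) (k : ℕ) : F g ∈ I ⊔ maximalIdeal (PS n) ^ (k + 1) := by
  let _ : TopologicalSpace (JetSpace n k) := zTop n k
  set K := I ⊔ maximalIdeal (PS n) ^ (k + 1)
  let Φ : JetSpace n k → PS n := fun J =>
    MvPolynomial.aeval (jetSeries J) (truncTotal (k + 1) g)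
  have hΦ : ∀ F' : FormalDiffeo n, F' g ∈ K ↔ Φ (jetOf n k F') ∈ K := fun F' => by
    have hdiff : F' g - Φ (jetOf n k F') ∈ K :=
      Ideal.mem_sup_right (sub_aeval_jetSeries_mem_maximalIdeal_pow F' g)
    exact ⟨fun h => by simpa using sub_mem h hdiff, fun h => by simpa using add_mem hdiff h⟩
  have hclosed : IsClosed {J | Φ J ∈ K} :=
    isClosed_setOf_mem_ideal le_sup_right (coeff_aeval_jetSeries_mem_polyFuns _)
  have hjets : jetOf n k '' {F' : FormalDiffeo n | ∀ g ∈ I, F' g ∈ I} ⊆ {J | Φ J ∈ K} := by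
    rintro _ ⟨F', hF', rfl⟩
    exact (hΦ F').mp (Ideal.mem_sup_left (hF' g hg))
  exact (hΦ F).mpr (closure_minimal hjets hclosed (hF k))

theorem proAlgClosure_setOf_forall_apply_mem {n : ℕ} (I : Ideal (PS n)) :
    proAlgClosure {F : FormalDiffeo n | ∀ g ∈ I, F g ∈ I} = {F | ∀ g ∈ I, F g ∈ I} := by
  refine Set.Subset.antisymm (fun F hF g hg => ?_)
    (fun F hF k => @subset_closure _ (zTop n k) _ _ (Set.mem_image_of_mem _ hF))
  rw [← Ideal.iInf_sup_pow_eq I (maximalIdeal.isMaximal (PS n)).ne_top, Submodule.mem_iInf]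
  rintro (_ | k)
  · simp
  · exact apply_mem_sup_maximalIdeal_pow_of_mem_proAlgClosure hF hg k

/-- for an ideal `I` of `ℂ[[x₁,…,xₙ]]`, the stabilizer
`𝓘_I = {F : I∘F ⊆ I}` is a pro-algebraic subgroup of the group of formal diffeomorphisms,
and moreover `𝓘_I = {F : I∘F = I}`. -/
theorem ideal_stabilizer_proalgebraic {n : ℕ} (I : Ideal (PS n)) :
    -- `𝓘_I` is a subgroup ...
    (∃ H : Subgroup (FormalDiffeo n),
      (H : Set (FormalDiffeo n)) = {F : FormalDiffeo n | ∀ g ∈ I, F g ∈ I}) ∧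
    -- ... which is pro-algebraic ...
    proAlgClosure {F : FormalDiffeo n | ∀ g ∈ I, F g ∈ I} =
      {F : FormalDiffeo n | ∀ g ∈ I, F g ∈ I} ∧
    -- ... and `I∘F ⊆ I` iff `I∘F = I`
    {F : FormalDiffeo n | ∀ g ∈ I, F g ∈ I} =
      {F : FormalDiffeo n | (fun g => F g) '' (I : Set (PS n)) = (I : Set (PS n))} := by
  have hstab : ∀ F : FormalDiffeo n,
      F ∈ MulAction.stabilizer (FormalDiffeo n) I ↔ ∀ g ∈ I, F g ∈ I :=
    fun F => Ideal.mem_stabilizer_iff_forall_smul_mem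
  refine ⟨⟨_, Set.ext hstab⟩, proAlgClosure_setOf_forall_apply_mem I,
    Set.ext fun F => ⟨fun hF => ?_, fun hF g hg => (Set.ext_iff.mp hF (F g)).mp ⟨g, hg, rfl⟩⟩⟩
  refine (Set.image_subset_iff.mpr hF).antisymm fun g hg => ⟨F⁻¹ g, ?_, F.apply_symm_apply g⟩
  exact (hstab F⁻¹).mp (inv_mem ((hstab F).mpr hF)) g hg

end
end
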